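/- Let H be a Hopf algebra over ℂ and J, K Hopf 2-cocycles for H. Define the twisted multiplication on H by m'(a ⊗ b) = Σ K⁻¹(a₁,b₁) a₂b₂ J(a₃,b₃). Then the comultiplication Δ : H → H ⊗ H is an injective algebra homomorphism from (H, m') into the tensor product algebra (H, ₖm) ⊗ (H, mⱼ), where ₖm(a ⊗ b) = Σ K⁻¹(a₁,b₁) a₂b₂ and mⱼ(a ⊗ b) = Σ a₁b₁ J(a₂,b₂). -/
import Mathlib


open TensorProduct

noncomputable section

/-- Convolution product of two `ℂ`-valued functionals on a `ℂ`-coalgebra. -/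
def conv {C : Type} [AddCommGroup C] [Module ℂ C] [Coalgebra ℂ C]
    (f g : C →ₗ[ℂ] ℂ) : C →ₗ[ℂ] ℂ :=
  LinearMap.mul' ℂ ℂ ∘ₗ TensorProduct.map f g ∘ₗ Coalgebra.comul

variable {H : Type} [Ring H] [HopfAlgebra ℂ H]

/-- `a ⊗ b ⊗ c ↦ Σ J(a₁b₁ ⊗ c) J(a₂ ⊗ b₂)`. -/
def cocycleLHS (J : H ⊗[ℂ] H →ₗ[ℂ] ℂ) : (H ⊗[ℂ] H) ⊗[ℂ] H →ₗ[ℂ] ℂ :=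
  conv (J ∘ₗ TensorProduct.map (LinearMap.mul' ℂ H) LinearMap.id)
    (LinearMap.mul' ℂ ℂ ∘ₗ TensorProduct.map J Coalgebra.counit)

/-- `a ⊗ b ⊗ c ↦ Σ J(a ⊗ b₁c₁) J(b₂ ⊗ c₂)`. -/
def cocycleRHS (J : H ⊗[ℂ] H →ₗ[ℂ] ℂ) : (H ⊗[ℂ] H) ⊗[ℂ] H →ₗ[ℂ] ℂ :=
  conv (J ∘ₗ TensorProduct.map LinearMap.id (LinearMap.mul' ℂ H)
        ∘ₗ (TensorProduct.assoc ℂ H H H).toLinearMap)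
    (LinearMap.mul' ℂ ℂ ∘ₗ TensorProduct.map Coalgebra.counit J
        ∘ₗ (TensorProduct.assoc ℂ H H H).toLinearMap)

/-- A Hopf 2-cocycle for `H`: a convolution-invertible functional on `H ⊗ H` satisfying
`Σ J(a₁b₁, c) J(a₂, b₂) = Σ J(a, b₁c₁) J(b₂, c₂)` and `J(a,1) = ε(a) = J(1,a)`. -/
structure IsHopf2Cocycle (J : H ⊗[ℂ] H →ₗ[ℂ] ℂ) : Prop where
  invertible : ∃ J' : H ⊗[ℂ] H →ₗ[ℂ] ℂ,
    conv J J' = Coalgebra.counit ∧ conv J' J = Coalgebra.counit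
  cocycle : cocycleLHS J = cocycleRHS J
  norm_right : ∀ a : H, J (a ⊗ₜ[ℂ] (1 : H)) = Coalgebra.counit a
  norm_left : ∀ a : H, J ((1 : H) ⊗ₜ[ℂ] a) = Coalgebra.counit a


/-- The doubly twisted product `a ⊗ b ↦ Σ φ(a₁ ⊗ b₁) a₂b₂ ψ(a₃ ⊗ b₃)`. -/
def twP (φ ψ : H ⊗[ℂ] H →ₗ[ℂ] ℂ) : H ⊗[ℂ] H →ₗ[ℂ] H :=
  (TensorProduct.lid ℂ H).toLinearMap
    ∘ₗ TensorProduct.map φ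
        ((TensorProduct.rid ℂ H).toLinearMap
          ∘ₗ TensorProduct.map (LinearMap.mul' ℂ H) ψ)
    ∘ₗ TensorProduct.map LinearMap.id Coalgebra.comul
    ∘ₗ Coalgebra.comul

/-- The right-twisted product `a ⊗ b ↦ Σ a₁b₁ ψ(a₂ ⊗ b₂)`. -/
def twR (ψ : H ⊗[ℂ] H →ₗ[ℂ] ℂ) : H ⊗[ℂ] H →ₗ[ℂ] H :=
  (TensorProduct.rid ℂ H).toLinearMap
    ∘ₗ TensorProduct.map (LinearMap.mul' ℂ H) ψ ∘ₗ Coalgebra.comul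

/-- The left-twisted product `a ⊗ b ↦ Σ φ(a₁ ⊗ b₁) a₂b₂`. -/
def twL (φ : H ⊗[ℂ] H →ₗ[ℂ] ℂ) : H ⊗[ℂ] H →ₗ[ℂ] H :=
  (TensorProduct.lid ℂ H).toLinearMap
    ∘ₗ TensorProduct.map φ (LinearMap.mul' ℂ H) ∘ₗ Coalgebra.comul


namespace TwistAux

open TensorProduct LinearMap

variable {M N P Q S : Type} [AddCommGroup M] [Module ℂ M] [AddCommGroup N] [Module ℂ N]
  [AddCommGroup P] [Module ℂ P] [AddCommGroup Q] [Module ℂ Q] [AddCommGroup S] [Module ℂ S]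

lemma auxAl (f : M →ₗ[ℂ] ℂ) (g : N →ₗ[ℂ] P) (h : P →ₗ[ℂ] Q) :
    h ∘ₗ (TensorProduct.lid ℂ P).toLinearMap ∘ₗ TensorProduct.map f g
      = (TensorProduct.lid ℂ Q).toLinearMap ∘ₗ TensorProduct.map f (h ∘ₗ g) := by
  apply TensorProduct.ext'
  intro x y
  simp

lemma auxAr (g : M →ₗ[ℂ] P) (f : N →ₗ[ℂ] ℂ) (h : P →ₗ[ℂ] Q) :
    h ∘ₗ (TensorProduct.rid ℂ P).toLinearMap ∘ₗ TensorProduct.map g f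
      = (TensorProduct.rid ℂ Q).toLinearMap ∘ₗ TensorProduct.map (h ∘ₗ g) f := by
  apply TensorProduct.ext'
  intro x y
  simp

lemma auxB (g : M →ₗ[ℂ] P) (g' : N →ₗ[ℂ] S) (ψ : Q →ₗ[ℂ] ℂ) :
    (TensorProduct.rid ℂ (P ⊗[ℂ] S)).toLinearMap
        ∘ₗ TensorProduct.map (TensorProduct.map g g') ψ
      = TensorProduct.map g ((TensorProduct.rid ℂ S).toLinearMap ∘ₗ TensorProduct.map g' ψ)
          ∘ₗ (TensorProduct.assoc ℂ M N Q).toLinearMap := by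
  apply TensorProduct.ext_threefold
  intro x y z
  simp [smul_tmul', TensorProduct.tmul_smul]

lemma auxC (φ : M →ₗ[ℂ] ℂ) (g : N →ₗ[ℂ] P) (k : Q →ₗ[ℂ] S) :
    (TensorProduct.lid ℂ (P ⊗[ℂ] S)).toLinearMap
        ∘ₗ TensorProduct.map φ (TensorProduct.map g k)
        ∘ₗ (TensorProduct.assoc ℂ M N Q).toLinearMap
      = TensorProduct.map ((TensorProduct.lid ℂ P).toLinearMap ∘ₗ TensorProduct.map φ g) k := by
  apply TensorProduct.ext_threefold
  intro x y z
  simp [smul_tmul', TensorProduct.tmul_smul]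

variable {H : Type} [Ring H] [HopfAlgebra ℂ H]

lemma mul_eq_map_mul' (s t : H ⊗[ℂ] H) :
    TensorProduct.map (LinearMap.mul' ℂ H) (LinearMap.mul' ℂ H)
        (TensorProduct.tensorTensorTensorComm ℂ H H H H (s ⊗ₜ[ℂ] t)) = s * t := by
  induction s using TensorProduct.induction_on with
  | zero => simp
  | tmul x y =>
    induction t using TensorProduct.induction_on with
    | zero => simp
    | tmul z w => simp [Algebra.TensorProduct.tmul_mul_tmul]
    | add u v hu hv => simp only [TensorProduct.tmul_add, map_add, mul_add, hu, hv]
  | add u v hu hv => simp only [TensorProduct.add_tmul, map_add, add_mul, hu, hv]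

lemma comul_comp_mul' :
    (Coalgebra.comul (R := ℂ) (A := H)) ∘ₗ LinearMap.mul' ℂ H
      = TensorProduct.map (LinearMap.mul' ℂ H) (LinearMap.mul' ℂ H)
          ∘ₗ (Coalgebra.comul (R := ℂ) (A := H ⊗[ℂ] H)) := by
  apply TensorProduct.ext'
  intro a b
  simp only [LinearMap.comp_apply, LinearMap.mul'_apply, Bialgebra.comul_mul]
  rw [show (Coalgebra.comul (R := ℂ) (A := H ⊗[ℂ] H))
      = TensorProduct.tensorTensorTensorComm ℂ H H H H ∘ₗ
          TensorProduct.map Coalgebra.comul Coalgebra.comul from rfl]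
  simp only [LinearMap.comp_apply, TensorProduct.map_tmul, LinearEquiv.coe_coe]
  rw [mul_eq_map_mul']

lemma stepB (ψ : H ⊗[ℂ] H →ₗ[ℂ] ℂ) :
    (Coalgebra.comul (R := ℂ) (A := H)) ∘ₗ twR ψ
      = TensorProduct.map (LinearMap.mul' ℂ H) (twR ψ)
          ∘ₗ (Coalgebra.comul (R := ℂ) (A := H ⊗[ℂ] H)) := by
  set m := LinearMap.mul' ℂ H with hm
  set Δ₂ := Coalgebra.comul (R := ℂ) (A := H ⊗[ℂ] H) with hΔ₂
  have m1 : TensorProduct.map (TensorProduct.map m m ∘ₗ Δ₂) ψ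
      = TensorProduct.map (TensorProduct.map m m) ψ ∘ₗ TensorProduct.map Δ₂ LinearMap.id := by
    rw [← TensorProduct.map_comp, LinearMap.comp_id]
  have m2 : TensorProduct.map m ((TensorProduct.rid ℂ H).toLinearMap ∘ₗ TensorProduct.map m ψ)
        ∘ₗ TensorProduct.map (LinearMap.id : H ⊗[ℂ] H →ₗ[ℂ] H ⊗[ℂ] H) Δ₂
      = TensorProduct.map m (twR ψ) := by
    rw [← TensorProduct.map_comp, LinearMap.comp_id, LinearMap.comp_assoc]
    rfl
  apply LinearMap.ext
  intro c
  calc (Coalgebra.comul (R := ℂ) (A := H) ∘ₗ twR ψ) c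
      = ((Coalgebra.comul (R := ℂ) (A := H)) ∘ₗ (TensorProduct.rid ℂ H).toLinearMap
          ∘ₗ TensorProduct.map m ψ) (Δ₂ c) := rfl
    _ = ((TensorProduct.rid ℂ (H ⊗[ℂ] H)).toLinearMap
          ∘ₗ TensorProduct.map ((Coalgebra.comul (R := ℂ) (A := H)) ∘ₗ m) ψ) (Δ₂ c) := by
        exact LinearMap.congr_fun (auxAr m ψ (Coalgebra.comul (R := ℂ) (A := H))) (Δ₂ c)
    _ = (TensorProduct.rid ℂ (H ⊗[ℂ] H)).toLinearMap
          ((TensorProduct.map (TensorProduct.map m m) ψ)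
            ((TensorProduct.map Δ₂ LinearMap.id) (Δ₂ c))) := by
        rw [LinearMap.comp_apply, comul_comp_mul', m1]
        rfl
    _ = (TensorProduct.rid ℂ (H ⊗[ℂ] H)).toLinearMap
          ((TensorProduct.map (TensorProduct.map m m) ψ)
            ((TensorProduct.assoc ℂ (H ⊗[ℂ] H) (H ⊗[ℂ] H) (H ⊗[ℂ] H)).symm
              ((TensorProduct.map LinearMap.id Δ₂) (Δ₂ c)))) := by
        exact congrArg _ (congrArg _ (Coalgebra.coassoc_symm_apply c).symm)
    _ = TensorProduct.map m ((TensorProduct.rid ℂ H).toLinearMap ∘ₗ TensorProduct.map m ψ)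
          ((TensorProduct.map LinearMap.id Δ₂) (Δ₂ c)) := by
        have h := LinearMap.congr_fun (auxB m m ψ)
          ((TensorProduct.assoc ℂ (H ⊗[ℂ] H) (H ⊗[ℂ] H) (H ⊗[ℂ] H)).symm
            ((TensorProduct.map LinearMap.id Δ₂) (Δ₂ c)))
        simpa using h
    _ = (TensorProduct.map m (twR ψ) ∘ₗ Δ₂) c := by
        exact LinearMap.congr_fun m2 (Δ₂ c)

lemma key (φ ψ : H ⊗[ℂ] H →ₗ[ℂ] ℂ) :
    (Coalgebra.comul (R := ℂ) (A := H)) ∘ₗ twP φ ψ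
      = TensorProduct.map (twL φ) (twR ψ)
          ∘ₗ (Coalgebra.comul (R := ℂ) (A := H ⊗[ℂ] H)) := by
  set m := LinearMap.mul' ℂ H with hm
  set Δ₂ := Coalgebra.comul (R := ℂ) (A := H ⊗[ℂ] H) with hΔ₂
  have m0 : TensorProduct.map φ
        ((TensorProduct.rid ℂ H).toLinearMap ∘ₗ TensorProduct.map m ψ)
        ∘ₗ TensorProduct.map (LinearMap.id : H ⊗[ℂ] H →ₗ[ℂ] H ⊗[ℂ] H) Δ₂
      = TensorProduct.map φ (twR ψ) := by
    rw [← TensorProduct.map_comp, LinearMap.comp_id, LinearMap.comp_assoc]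
    rfl
  have m1 : TensorProduct.map φ (TensorProduct.map m (twR ψ) ∘ₗ Δ₂)
      = TensorProduct.map φ (TensorProduct.map m (twR ψ))
          ∘ₗ TensorProduct.map LinearMap.id Δ₂ := by
    rw [← TensorProduct.map_comp, LinearMap.comp_id]
  have m2 : TensorProduct.map ((TensorProduct.lid ℂ H).toLinearMap ∘ₗ TensorProduct.map φ m)
        (twR ψ) ∘ₗ TensorProduct.map Δ₂ (LinearMap.id : H ⊗[ℂ] H →ₗ[ℂ] H ⊗[ℂ] H)
      = TensorProduct.map (twL φ) (twR ψ) := by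
    rw [← TensorProduct.map_comp, LinearMap.comp_id, LinearMap.comp_assoc]
    rfl
  apply LinearMap.ext
  intro c
  calc (Coalgebra.comul (R := ℂ) (A := H) ∘ₗ twP φ ψ) c
      = (Coalgebra.comul (R := ℂ) (A := H))
          ((TensorProduct.lid ℂ H).toLinearMap
            ((TensorProduct.map φ
                ((TensorProduct.rid ℂ H).toLinearMap ∘ₗ TensorProduct.map m ψ)
              ∘ₗ TensorProduct.map LinearMap.id Δ₂) (Δ₂ c))) := rfl
    _ = ((Coalgebra.comul (R := ℂ) (A := H)) ∘ₗ (TensorProduct.lid ℂ H).toLinearMap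
          ∘ₗ TensorProduct.map φ (twR ψ)) (Δ₂ c) := by
        rw [m0]
        rfl
    _ = ((TensorProduct.lid ℂ (H ⊗[ℂ] H)).toLinearMap
          ∘ₗ TensorProduct.map φ ((Coalgebra.comul (R := ℂ) (A := H)) ∘ₗ twR ψ)) (Δ₂ c) := by
        exact LinearMap.congr_fun (auxAl φ (twR ψ) (Coalgebra.comul (R := ℂ) (A := H))) (Δ₂ c)
    _ = (TensorProduct.lid ℂ (H ⊗[ℂ] H)).toLinearMap
          ((TensorProduct.map φ (TensorProduct.map m (twR ψ)))
            ((TensorProduct.map LinearMap.id Δ₂) (Δ₂ c))) := by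
        rw [LinearMap.comp_apply, stepB, m1]
        rfl
    _ = (TensorProduct.lid ℂ (H ⊗[ℂ] H)).toLinearMap
          ((TensorProduct.map φ (TensorProduct.map m (twR ψ)))
            ((TensorProduct.assoc ℂ (H ⊗[ℂ] H) (H ⊗[ℂ] H) (H ⊗[ℂ] H))
              ((TensorProduct.map Δ₂ LinearMap.id) (Δ₂ c)))) := by
        exact congrArg _ (congrArg _ (Coalgebra.coassoc_apply c).symm)
    _ = TensorProduct.map ((TensorProduct.lid ℂ H).toLinearMap ∘ₗ TensorProduct.map φ m)
          (twR ψ) ((TensorProduct.map Δ₂ LinearMap.id) (Δ₂ c)) := by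
        have h := LinearMap.congr_fun (auxC φ m (twR ψ))
          ((TensorProduct.map Δ₂ LinearMap.id) (Δ₂ c))
        simpa using h
    _ = (TensorProduct.map (twL φ) (twR ψ) ∘ₗ Δ₂) c := by
        exact LinearMap.congr_fun m2 (Δ₂ c)

end TwistAux

/-- Let `J, K` be Hopf 2-cocycles for `H`, with `Kinv` the convolution inverse of `K`.
Then the comultiplication `Δ : H → H ⊗ H` is an injective algebra homomorphism from
`(H, ₖmⱼ)` (product `Σ K⁻¹(a₁,b₁) a₂b₂ J(a₃,b₃)`) into the tensor product algebra
`(H, ₖm) ⊗ (H, mⱼ)`, whose product is `(a⊗b)(c⊗d) = ₖm(a⊗c) ⊗ mⱼ(b⊗d)`. -/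
theorem comul_algebra_embedding_of_twists
    (J K Kinv : H ⊗[ℂ] H →ₗ[ℂ] ℂ)
    (hJ : IsHopf2Cocycle J) (hK : IsHopf2Cocycle K)
    (hKinv : conv K Kinv = Coalgebra.counit ∧ conv Kinv K = Coalgebra.counit) :
    Function.Injective (Coalgebra.comul (R := ℂ) (A := H))
    ∧ ∀ a b : H,
        Coalgebra.comul (R := ℂ) (twP Kinv J (a ⊗ₜ[ℂ] b))
          = TensorProduct.map (twL Kinv) (twR J)
              ((TensorProduct.tensorTensorTensorComm ℂ H H H H)
                (Coalgebra.comul (R := ℂ) a ⊗ₜ[ℂ] Coalgebra.comul (R := ℂ) b)) := by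
  
  constructor
  · intro x y hxy
    have h1 : (1 : ℂ) ⊗ₜ[ℂ] x = (1 : ℂ) ⊗ₜ[ℂ] y := by
      rw [← Coalgebra.rTensor_counit_comul (R := ℂ) x,
        ← Coalgebra.rTensor_counit_comul (R := ℂ) y, hxy]
    simpa using congrArg (TensorProduct.lid ℂ H) h1
  · intro a b
    have h2 : (TensorProduct.tensorTensorTensorComm ℂ H H H H)
        (Coalgebra.comul (R := ℂ) a ⊗ₜ[ℂ] Coalgebra.comul (R := ℂ) b)
        = Coalgebra.comul (R := ℂ) (a ⊗ₜ[ℂ] b) := by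
      rw [show (Coalgebra.comul (R := ℂ) (A := H ⊗[ℂ] H))
          = (TensorProduct.tensorTensorTensorComm ℂ H H H H).toLinearMap ∘ₗ
              TensorProduct.map Coalgebra.comul Coalgebra.comul from rfl]
      simp
    rw [h2]
    exact LinearMap.congr_fun (TwistAux.key Kinv J) (a ⊗ₜ[ℂ] b)
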